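/- arXiv:1509.07817 — 3 statements merged into one kernel-verified Lean document; each statement's English description precedes it below -/
import Mathlib

section
/- Let A and A' be two torsion abelian groups of cofinite type (i.e., for every positive integer n the n-torsion subgroup is finite). If for every positive integer n the n-torsion subgroups of A and A' have the same cardinality, then A and A' are isomorphic as abelian groups. -/
/-- The `n`-torsion subgroup of an abelian group. -/
def nTorsion (n : ℕ) (A : Type*) [AddCommGroup A] : AddSubgroup A where
  carrier := {x | n • x = 0}
  zero_mem' := by simp
  add_mem' := by
    intro a b ha hb
    simp only [Set.mem_setOf_eq] at *
    rw [smul_add, ha, hb, add_zero]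
  neg_mem' := by
    intro a ha
    simp only [Set.mem_setOf_eq] at *
    rw [smul_neg, ha, neg_zero]

/-- The subgroup `n•A` of an abelian group `A`. -/
def smulTop (n : ℕ) (A : Type*) [AddCommGroup A] : AddSubgroup A where
  carrier := Set.range fun y : A => n • y
  zero_mem' := ⟨0, smul_zero n⟩
  add_mem' := by
    rintro _ _ ⟨a, rfl⟩ ⟨b, rfl⟩
    exact ⟨a + b, smul_add n a b⟩
  neg_mem' := by
    rintro _ ⟨a, rfl⟩
    exact ⟨-a, smul_neg n a⟩

/-- The `ℓ`-primary component of an abelian group: elements of `ℓ`-power order. -/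
def primaryPart (ℓ : ℕ) (A : Type*) [AddCommGroup A] : AddSubgroup A where
  carrier := {x | ∃ k : ℕ, ℓ ^ k • x = 0}
  zero_mem' := ⟨0, smul_zero _⟩
  add_mem' := by
    rintro a b ⟨j, hj⟩ ⟨k, hk⟩
    refine ⟨j + k, ?_⟩
    have ha : ℓ ^ (j + k) • a = 0 := by rw [add_comm, pow_add, mul_smul, hj, smul_zero]
    have hb : ℓ ^ (j + k) • b = 0 := by rw [pow_add, mul_smul, hk, smul_zero]
    rw [smul_add, ha, hb, add_zero]
  neg_mem' := by
    rintro a ⟨k, hk⟩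
    exact ⟨k, by rw [smul_neg, hk, neg_zero]⟩

/-- The group `ℚ/ℤ`. -/
abbrev QZ : Type := ℚ ⧸ AddSubgroup.zmultiples (1 : ℚ)

/-- The Prüfer `ℓ`-group `ℚ_ℓ/ℤ_ℓ`, realized as the `ℓ`-primary part of `ℚ/ℤ`. -/
abbrev Prufer (ℓ : ℕ) : Type := ↥(primaryPart ℓ QZ)

/-- The maximal divisible subgroup of an abelian group. -/
def divisiblePart (A : Type*) [AddCommGroup A] : AddSubgroup A :=
  sSup {H : AddSubgroup A | ∀ n : ℕ, 0 < n → ∀ x ∈ H, ∃ y ∈ H, n • y = x}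

/-- The torsion subgroup of an abelian group. -/
def torsionSub (A : Type*) [AddCommGroup A] : AddSubgroup A where
  carrier := {x | ∃ n : ℕ, 0 < n ∧ n • x = 0}
  zero_mem' := ⟨1, one_pos, smul_zero 1⟩
  add_mem' := by
    rintro a b ⟨j, hj, hja⟩ ⟨k, hk, hkb⟩
    refine ⟨j * k, Nat.mul_pos hj hk, ?_⟩
    have ha : (j * k) • a = 0 := by rw [mul_comm, mul_smul, hja, smul_zero]
    have hb : (j * k) • b = 0 := by rw [mul_smul, hkb, smul_zero]
    rw [smul_add, ha, hb, add_zero]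
  neg_mem' := by
    rintro a ⟨k, hk, hka⟩
    exact ⟨k, hk, by rw [smul_neg, hka, neg_zero]⟩

/-! For a finite abelian group `G ≃ ∏ ZMod qᵢ` with prime powers `qᵢ` (structure theorem),
`|G[n]| = ∏ gcd qᵢ n`, and `|G[p^(k+1)]| / |G[p^k]| = p ^ #{i | p^(k+1) ∣ qᵢ}`. These counts
determine how often each prime power occurs among the `qᵢ`, hence `G` up to isomorphism.
In general the levels `A[k!]`, `A'[k!]` are finite with equal torsion counts, so the sets of
isomorphisms `A[k!] ≃+ A'[k!]` are finite and nonempty, and restriction makes them an inverse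
system. By Kőnig's lemma it has a compatible family, which glues to `A ≃+ A'`. -/

open Finset

section NTorsion

variable {A B : Type*} [AddCommGroup A] [AddCommGroup B]

lemma mem_nTorsion {n : ℕ} {x : A} : x ∈ nTorsion n A ↔ n • x = 0 := Iff.rfl

lemma mem_nTorsion_iff_addOrderOf_dvd {n : ℕ} {x : A} : x ∈ nTorsion n A ↔ addOrderOf x ∣ n :=
  addOrderOf_dvd_iff_nsmul_eq_zero.symm

lemma nTorsion_mono {M N : ℕ} (h : M ∣ N) : nTorsion M A ≤ nTorsion N A := fun _ hx =>
  mem_nTorsion_iff_addOrderOf_dvd.2 ((mem_nTorsion_iff_addOrderOf_dvd.1 hx).trans h)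

lemma nTorsion_eq_nTorsion_gcd {N : ℕ} (hN : ∀ x : A, N • x = 0) (n : ℕ) :
    nTorsion n A = nTorsion (n.gcd N) A := by
  ext x
  simp only [mem_nTorsion_iff_addOrderOf_dvd, Nat.dvd_gcd_iff, iff_self_and]
  exact fun _ => addOrderOf_dvd_of_nsmul_eq_zero (hN x)

lemma nTorsion_eq_ker (n : ℕ) : nTorsion n A = (nsmulAddMonoidHom n : A →+ A).ker := rfl

lemma card_nTorsion_of_isAddCyclic [IsAddCyclic A] [Finite A] (n : ℕ) :
    Nat.card (nTorsion n A) = (Nat.card A).gcd n := by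
  rw [nTorsion_eq_ker]
  exact IsAddCyclic.card_nsmulAddMonoidHom_ker A n

lemma card_nTorsion_pi {ι : Type*} [Fintype ι] (G : ι → Type*) [∀ i, AddCommGroup (G i)] (n : ℕ) :
    Nat.card (nTorsion n (∀ i, G i)) = ∏ i, Nat.card (nTorsion n (G i)) := by
  rw [← Nat.card_pi]
  exact Nat.card_congr ((Equiv.subtypeEquivRight (q := fun f : ∀ i, G i => ∀ i, n • f i = 0)
    fun _ => funext_iff).trans (Equiv.subtypePiEquivPi (p := fun i (b : G i) => n • b = 0)))

def AddEquiv.nTorsionCongr (e : A ≃+ B) (n : ℕ) : nTorsion n A ≃+ nTorsion n B :=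
  { e.toEquiv.subtypeEquiv fun x => by simp [mem_nTorsion, ← map_nsmul] with
    map_add' := fun x y => Subtype.ext (map_add e x.1 y.1) }

def nTorsionNTorsionEquiv {M N : ℕ} (h : M ∣ N) : nTorsion M (nTorsion N A) ≃+ nTorsion M A where
  toFun x := ⟨x.1.1, congrArg Subtype.val x.2⟩
  invFun y := ⟨⟨y.1, nTorsion_mono h y.2⟩, Subtype.ext y.2⟩
  left_inv _ := rfl
  right_inv _ := rfl
  map_add' _ _ := rfl

lemma card_nTorsion_nTorsion (n N : ℕ) :
    Nat.card (nTorsion n (nTorsion N A)) = Nat.card (nTorsion (n.gcd N) A) := by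
  rw [nTorsion_eq_nTorsion_gcd (fun x => Subtype.ext x.2) n]
  exact Nat.card_congr (nTorsionNTorsionEquiv (Nat.gcd_dvd_right n N)).toEquiv

def AddEquiv.restrictNTorsion {M N : ℕ} (e : nTorsion N A ≃+ nTorsion N B) (h : M ∣ N) :
    nTorsion M A ≃+ nTorsion M B :=
  (nTorsionNTorsionEquiv h).symm.trans ((e.nTorsionCongr M).trans (nTorsionNTorsionEquiv h))

end NTorsion

section PrimePowerCounting

variable {p : ℕ}

lemma Nat.gcd_prime_pow_succ (hp : p.Prime) (m k : ℕ) :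
    m.gcd (p ^ (k + 1)) = m.gcd (p ^ k) * if p ^ (k + 1) ∣ m then p else 1 := by
  split_ifs with h
  · rw [Nat.gcd_eq_right h, Nat.gcd_eq_right ((pow_dvd_pow p k.le_succ).trans h), pow_succ]
  · rw [mul_one]
    refine Nat.dvd_antisymm (Nat.dvd_gcd (Nat.gcd_dvd_left _ _) ?_)
      (Nat.gcd_dvd_gcd_of_dvd_right _ (pow_dvd_pow p k.le_succ))
    obtain ⟨j, hj, hgcd⟩ := (Nat.dvd_prime_pow hp).1 (Nat.gcd_dvd_right m (p ^ (k + 1)))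
    have hjk : j ≠ k + 1 := by
      rintro rfl
      exact h (hgcd ▸ Nat.gcd_dvd_left m _)
    exact hgcd ▸ pow_dvd_pow p (by omega)

lemma IsPrimePow.prime_pow_succ_dvd_iff {m : ℕ} (hm : IsPrimePow m) (hp : p.Prime) (k : ℕ) :
    p ^ (k + 1) ∣ m ↔ m = p ^ (k + 1) ∨ p ^ (k + 2) ∣ m := by
  refine ⟨fun h => ?_, ?_⟩
  · obtain ⟨q, e, hq, -, rfl⟩ := hm
    have hq := Nat.prime_iff.2 hq
    obtain rfl : p = q := (Nat.prime_dvd_prime_iff_eq hp hq).1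
      (hp.dvd_of_dvd_pow ((dvd_pow_self p k.succ_ne_zero).trans h))
    rw [Nat.pow_dvd_pow_iff_le_right hp.one_lt] at h ⊢
    rcases h.eq_or_lt with rfl | hlt
    · exact Or.inl rfl
    · exact Or.inr hlt
  · rintro (rfl | h)
    · exact dvd_rfl
    · exact (pow_dvd_pow p (k + 1).le_succ).trans h

variable {ι κ : Type*} [Fintype ι] [Fintype κ] {m : ι → ℕ} {m' : κ → ℕ}

lemma prod_gcd_prime_pow_succ (hp : p.Prime) (k : ℕ) :
    ∏ i, (m i).gcd (p ^ (k + 1)) = (∏ i, (m i).gcd (p ^ k)) * p ^ #{i | p ^ (k + 1) ∣ m i} := by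
  simp_rw [Nat.gcd_prime_pow_succ hp, prod_mul_distrib, ← prod_filter, prod_const]

lemma card_prime_pow_succ_dvd (hm : ∀ i, IsPrimePow (m i)) (hp : p.Prime) (k : ℕ) :
    #{i | p ^ (k + 1) ∣ m i} = #{i | m i = p ^ (k + 1)} + #{i | p ^ (k + 2) ∣ m i} := by
  classical
  rw [← card_union_of_disjoint, ← filter_or]
  · exact congrArg card (filter_congr fun i _ => (hm i).prime_pow_succ_dvd_iff hp k)
  · refine disjoint_filter.2 fun i _ h => ?_
    rw [h, Nat.pow_dvd_pow_iff_le_right hp.one_lt]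
    omega

lemma card_prime_pow_succ_dvd_eq_of_prod_gcd_eq
    (h : ∀ n, 0 < n → ∏ i, (m i).gcd n = ∏ j, (m' j).gcd n) (hp : p.Prime) (k : ℕ) :
    #{i | p ^ (k + 1) ∣ m i} = #{j | p ^ (k + 1) ∣ m' j} := by
  have hpos : 0 < ∏ j, (m' j).gcd (p ^ k) :=
    prod_pos fun j _ => Nat.gcd_pos_of_pos_right _ (pow_pos hp.pos k)
  have := h _ (pow_pos hp.pos (k + 1))
  rw [prod_gcd_prime_pow_succ hp, prod_gcd_prime_pow_succ hp, h _ (pow_pos hp.pos k)] at this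
  exact Nat.pow_right_injective hp.two_le (Nat.eq_of_mul_eq_mul_left hpos this)

lemma card_fiber_eq_of_prod_gcd_eq (hm : ∀ i, IsPrimePow (m i))
    (hm' : ∀ j, IsPrimePow (m' j)) (h : ∀ n, 0 < n → ∏ i, (m i).gcd n = ∏ j, (m' j).gcd n)
    (v : ℕ) : #{i | m i = v} = #{j | m' j = v} := by
  by_cases hv : IsPrimePow v
  · obtain ⟨p, k, hp, hk, rfl⟩ := hv
    have hp := Nat.prime_iff.2 hp
    obtain ⟨k, rfl⟩ : ∃ j, k = j + 1 := ⟨k - 1, by omega⟩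
    have h₁ := card_prime_pow_succ_dvd_eq_of_prod_gcd_eq h hp k
    have h₂ : #{i | p ^ (k + 2) ∣ m i} = #{j | p ^ (k + 2) ∣ m' j} :=
      card_prime_pow_succ_dvd_eq_of_prod_gcd_eq h hp (k + 1)
    have := card_prime_pow_succ_dvd hm hp k
    have := card_prime_pow_succ_dvd hm' hp k
    omega
  · rw [filter_false_of_mem (p := fun i => m i = v) fun i _ hi => hv (hi ▸ hm i),
      filter_false_of_mem (p := fun j => m' j = v) fun j _ hj => hv (hj ▸ hm' j), card_empty,
      card_empty]

end PrimePowerCounting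

section FiniteClassification

lemma card_nTorsion_pi_zmod {ι : Type*} [Fintype ι] (m : ι → ℕ) (hm : ∀ i, m i ≠ 0) (n : ℕ) :
    Nat.card (nTorsion n (∀ i, ZMod (m i))) = ∏ i, (m i).gcd n := by
  rw [card_nTorsion_pi]
  refine prod_congr rfl fun i _ => ?_
  have : NeZero (m i) := ⟨hm i⟩
  rw [card_nTorsion_of_isAddCyclic, Nat.card_zmod]

lemma exists_addEquiv_pi_zmod_isPrimePow (G : Type*) [AddCommGroup G] [Finite G] :
    ∃ (ι : Type) (_ : Fintype ι) (m : ι → ℕ),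
      (∀ i, IsPrimePow (m i)) ∧ Nonempty (G ≃+ ∀ i, ZMod (m i)) := by
  classical
  obtain ⟨ι, _, p, hp, e, ⟨f⟩⟩ := AddCommGroup.equiv_directSum_zmod_of_finite G
  have : ∀ i : {i // ¬e i ≠ 0}, Unique (ZMod (p i ^ e i)) := fun i => by
    rw [not_ne_iff.1 i.2, pow_zero]
    infer_instance
  exact ⟨{i // e i ≠ 0}, inferInstance, fun i => p i ^ e i,
    fun i => (hp i).isPrimePow.pow i.2, ⟨f.trans <| (DirectSum.addEquivProd _).trans <|
      (RingEquiv.piEquivPiSubtypeProd (fun i => e i ≠ 0) _).toAddEquiv.trans AddEquiv.prodUnique⟩⟩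

lemma nonempty_addEquiv_pi_zmod_of_card_fiber_eq {ι κ : Type*} [Fintype ι] [Fintype κ]
    {m : ι → ℕ} {m' : κ → ℕ} (h : ∀ v, #{i | m i = v} = #{j | m' j = v}) :
    Nonempty ((∀ i, ZMod (m i)) ≃+ ∀ j, ZMod (m' j)) := by
  have hfiber v : Nonempty ({i // m i = v} ≃ {j // m' j = v}) := by
    rw [← Fintype.card_eq, Fintype.card_subtype, Fintype.card_subtype, h]
  let σ : ι ≃ κ := Equiv.ofFiberEquiv fun v => (hfiber v).some
  have hσ i : m i = m' (σ i) := (Equiv.ofFiberEquiv_map _ i).symm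
  exact ⟨((RingEquiv.piCongrRight fun i => ZMod.ringEquivCongr (hσ i)).trans
    (RingEquiv.piCongrLeft (fun j => ZMod (m' j)) σ)).toAddEquiv⟩

theorem nonempty_addEquiv_of_card_nTorsion_eq {G H : Type*} [AddCommGroup G] [AddCommGroup H]
    [Finite G] [Finite H] (h : ∀ n, 0 < n → Nat.card (nTorsion n G) = Nat.card (nTorsion n H)) :
    Nonempty (G ≃+ H) := by
  obtain ⟨ι, _, m, hm, ⟨eG⟩⟩ := exists_addEquiv_pi_zmod_isPrimePow G
  obtain ⟨κ, _, m', hm', ⟨eH⟩⟩ := exists_addEquiv_pi_zmod_isPrimePow H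
  have hprod n (hn : 0 < n) : ∏ i, (m i).gcd n = ∏ j, (m' j).gcd n := by
    rw [← card_nTorsion_pi_zmod m (fun i => (hm i).ne_zero) n,
      ← card_nTorsion_pi_zmod m' (fun j => (hm' j).ne_zero) n,
      ← Nat.card_congr (eG.nTorsionCongr n).toEquiv, ← Nat.card_congr (eH.nTorsionCongr n).toEquiv]
    exact h n hn
  obtain ⟨e⟩ :=
    nonempty_addEquiv_pi_zmod_of_card_fiber_eq (card_fiber_eq_of_prod_gcd_eq hm hm' hprod)
  exact ⟨(eG.trans e).trans eH.symm⟩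

end FiniteClassification

section Compactness

variable {J : Type*} [Preorder J] [IsDirectedOrder J]

open CategoryTheory in
theorem exists_compatible_of_finite_inverse_system (S : J → Type*) [∀ j, Finite (S j)]
    [∀ j, Nonempty (S j)] (r : ∀ ⦃j k⦄, j ≤ k → S k → S j) (hr_refl : ∀ j x, r (le_refl j) x = x)
    (hr_trans : ∀ ⦃i j k⦄ (hij : i ≤ j) (hjk : j ≤ k) x, r hij (r hjk x) = r (hij.trans hjk) x) :
    ∃ u : ∀ j, S j, ∀ j k (h : j ≤ k), r h (u k) = u j := by
  let F : Jᵒᵖ ⥤ Type _ :=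
    { obj j := S j.unop
      map f := TypeCat.ofHom (r (leOfHom f.unop))
      map_id j := by ext x; exact hr_refl j.unop x
      map_comp f g := by ext x; exact (hr_trans (leOfHom g.unop) (leOfHom f.unop) x).symm }
  have : ∀ j, Finite (F.obj j) := fun j => inferInstanceAs (Finite (S j.unop))
  have : ∀ j, Nonempty (F.obj j) := fun j => inferInstanceAs (Nonempty (S j.unop))
  obtain ⟨u, hu⟩ := nonempty_sections_of_finite_inverse_system F
  exact ⟨fun j => u (Opposite.op j), fun j k h => hu (homOfLE h).op⟩

variable {A B : Type*} [AddCommGroup A] [AddCommGroup B]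

theorem nonempty_addEquiv_of_compatible {F : J → AddSubgroup A} {F' : J → AddSubgroup B}
    (hF : Monotone F) (hA : ∀ x, ∃ j, x ∈ F j) (hB : ∀ y, ∃ j, y ∈ F' j) (u : ∀ j, F j ≃+ F' j)
    (hu : ∀ j k (h : j ≤ k) (x : F j), (u k ⟨x, hF h x.2⟩ : B) = u j x) :
    Nonempty (A ≃+ B) := by
  choose level hlevel using hA
  have hval x j (hx : x ∈ F j) : (u j ⟨x, hx⟩ : B) = u (level x) ⟨x, hlevel x⟩ := by
    obtain ⟨k, hjk, hk⟩ := directed_of (· ≤ ·) j (level x)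
    rw [← hu j k hjk, ← hu _ k hk]
  let f : A →+ B := AddMonoidHom.mk' (fun x => u (level x) ⟨x, hlevel x⟩) fun x y => by
    obtain ⟨k, hxk, hyk⟩ := directed_of (· ≤ ·) (level x) (level y)
    have hx := hF hxk (hlevel x)
    have hy := hF hyk (hlevel y)
    rw [← hval x k hx, ← hval y k hy, ← hval (x + y) k (add_mem hx hy)]
    exact congrArg Subtype.val (map_add (u k) ⟨x, hx⟩ ⟨y, hy⟩)
  have hinj : Function.Injective f := by
    refine (injective_iff_map_eq_zero f).2 fun x hx => ?_
    have : u (level x) ⟨x, hlevel x⟩ = 0 := Subtype.ext hx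
    exact congrArg Subtype.val ((map_eq_zero_iff _ (u _).injective).1 this)
  have hsurj : Function.Surjective f := by
    intro y
    obtain ⟨j, hy⟩ := hB y
    refine ⟨(u j).symm ⟨y, hy⟩, ?_⟩
    change (u (level _) ⟨_, hlevel _⟩ : B) = y
    rw [← hval _ j (Subtype.prop _)]
    simp
  exact ⟨AddEquiv.ofBijective f ⟨hinj, hsurj⟩⟩

theorem nonempty_addEquiv_of_nonempty_addEquiv_nTorsion (N : J → ℕ)
    (hN : ∀ ⦃j k⦄, j ≤ k → N j ∣ N k)
    (hA : ∀ x : A, ∃ j, x ∈ nTorsion (N j) A) (hB : ∀ y : B, ∃ j, y ∈ nTorsion (N j) B)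
    [∀ j, Finite (nTorsion (N j) A)] [∀ j, Finite (nTorsion (N j) B)]
    (h : ∀ j, Nonempty (nTorsion (N j) A ≃+ nTorsion (N j) B)) :
    Nonempty (A ≃+ B) := by
  have : ∀ j, Finite (nTorsion (N j) A ≃+ nTorsion (N j) B) :=
    fun j => Finite.of_injective _ DFunLike.coe_injective
  obtain ⟨u, hu⟩ := exists_compatible_of_finite_inverse_system
    (fun j => nTorsion (N j) A ≃+ nTorsion (N j) B) (fun j k h e => e.restrictNTorsion (hN h))
    (fun _ _ => AddEquiv.ext fun _ => rfl) (fun _ _ _ _ _ _ => AddEquiv.ext fun _ => rfl)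
  exact nonempty_addEquiv_of_compatible (fun j k h => nTorsion_mono (hN h)) hA hB u
    fun j k h x => by rw [← hu j k h]; rfl

end Compactness

lemma exists_mem_nTorsion_factorial {A : Type*} [AddCommGroup A] {x : A}
    (hx : ∃ n, 0 < n ∧ n • x = 0) : ∃ k : ℕ, x ∈ nTorsion k.factorial A :=
  let ⟨n, hn, hnx⟩ := hx
  ⟨n, nTorsion_mono (Nat.dvd_factorial hn le_rfl) hnx⟩

/-- two torsion abelian groups of cofinite type with `n`-torsion subgroups
of the same cardinality for every `n > 0` are isomorphic. -/
theorem stmt_0 {A A' : Type} [AddCommGroup A] [AddCommGroup A']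
    (htors : ∀ x : A, ∃ n : ℕ, 0 < n ∧ n • x = 0)
    (htors' : ∀ x : A', ∃ n : ℕ, 0 < n ∧ n • x = 0)
    (hfin : ∀ n : ℕ, 0 < n → Finite (nTorsion n A))
    (hfin' : ∀ n : ℕ, 0 < n → Finite (nTorsion n A'))
    (hcard : ∀ n : ℕ, 0 < n → Nat.card (nTorsion n A) = Nat.card (nTorsion n A')) :
    Nonempty (A ≃+ A') := by
  have := fun k : ℕ => hfin _ k.factorial_pos
  have := fun k : ℕ => hfin' _ k.factorial_pos
  refine nonempty_addEquiv_of_nonempty_addEquiv_nTorsion Nat.factorial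
    (fun _ _ => Nat.factorial_dvd_factorial)
    (fun x => exists_mem_nTorsion_factorial (htors x))
    (fun y => exists_mem_nTorsion_factorial (htors' y)) fun k => ?_
  refine nonempty_addEquiv_of_card_nTorsion_eq fun n _ => ?_
  rw [card_nTorsion_nTorsion, card_nTorsion_nTorsion]
  exact hcard _ (Nat.gcd_pos_of_pos_right _ k.factorial_pos)
end

section
/- Let 0 → F → R → S → 0 be an exact sequence of abelian groups with F finite, and suppose that for some positive integer n the groups {x ∈ R : n•x = 0}, R/nR, {x ∈ S : n•x = 0}, S/nS are all finite. Then |{x∈R : n•x=0}| / |R/nR| = |{x∈S : n•x=0}| / |S/nS| · |{x∈F : n•x=0}| / |F/nF|, and |{x∈F : n•x=0}| = |F/nF|, so the ratios for R and S coincide. -/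
/-!
Multiplication by `n` on `0 → F → R → S → 0` gives, by the snake lemma, the exact sequence
`0 → F[n] → R[n] → S[n] → F/nF → R/nR → S/nS → 0`, and in an exact sequence of abelian groups the
products of the orders of the odd and of the even terms agree. For finite `F`, the groups `F[n]`
and `F/nF` are the kernel and cokernel of an endomorphism of a finite group, hence equinumerous.
-/

open Function

section Counting

variable {A₁ A₂ A₃ A₄ A₅ A₆ : Type*} [AddCommGroup A₁] [AddCommGroup A₂] [AddCommGroup A₃]
  [AddCommGroup A₄] [AddCommGroup A₅] [AddCommGroup A₆]

theorem Function.Exact.card_eq_card_range_mul_card_range {f : A₁ →+ A₂} {g : A₂ →+ A₃}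
    (h : Exact f g) : Nat.card A₂ = Nat.card f.range * Nat.card g.range := by
  rw [AddSubgroup.card_eq_card_quotient_mul_card_addSubgroup g.ker,
    Nat.card_congr (QuotientAddGroup.quotientKerEquivRange g).toEquiv, h.addMonoidHom_ker_eq,
    mul_comm]

theorem card_mul_card_mul_card_eq_of_exact (f₁ : A₁ →+ A₂) (f₂ : A₂ →+ A₃) (f₃ : A₃ →+ A₄)
    (f₄ : A₄ →+ A₅) (f₅ : A₅ →+ A₆) (h₁ : Injective f₁) (h₂ : Exact f₁ f₂) (h₃ : Exact f₂ f₃)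
    (h₄ : Exact f₃ f₄) (h₅ : Exact f₄ f₅) (h₆ : Surjective f₅) :
    Nat.card A₁ * Nat.card A₃ * Nat.card A₅ = Nat.card A₂ * Nat.card A₄ * Nat.card A₆ := by
  rw [Nat.card_congr (AddMonoidHom.ofInjective h₁).toEquiv, ← AddSubgroup.card_top (G := A₆),
    ← AddMonoidHom.range_eq_top.mpr h₆, h₂.card_eq_card_range_mul_card_range,
    h₃.card_eq_card_range_mul_card_range, h₄.card_eq_card_range_mul_card_range,
    h₅.card_eq_card_range_mul_card_range]
  ring

end Counting

section MulByN

variable (n : ℕ) {A B : Type*} [AddCommGroup A] [AddCommGroup B]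

theorem exact_subtype_nTorsion :
    Exact (nTorsion n A).subtype.toIntLinearMap (DistribSMul.toLinearMap ℤ A n) :=
  fun _ => ⟨fun h => ⟨⟨_, h⟩, rfl⟩, by rintro ⟨x, rfl⟩; exact x.2⟩

theorem exact_nsmul_mk_smulTop :
    Exact (DistribSMul.toLinearMap ℤ A n) (QuotientAddGroup.mk' (smulTop n A)).toIntLinearMap :=
  fun _ => QuotientAddGroup.eq_zero_iff _

theorem card_nTorsion_eq_card_quotient_smulTop [Finite A] :
    Nat.card (nTorsion n A) = Nat.card (A ⧸ smulTop n A) := by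
  have hrange : (DistribSMul.toAddMonoidHom A n).range = smulTop n A := rfl
  have hpos : 0 < Nat.card (smulTop n A) := Nat.card_pos
  apply Nat.eq_of_mul_eq_mul_right hpos
  calc Nat.card (nTorsion n A) * Nat.card (smulTop n A)
      = Nat.card A := by
        rw [(exact_subtype_nTorsion n (A := A)).card_eq_card_range_mul_card_range
          (f := (nTorsion n A).subtype) (g := DistribSMul.toAddMonoidHom A n),
          AddSubgroup.range_subtype, hrange]
    _ = Nat.card (A ⧸ smulTop n A) * Nat.card (smulTop n A) :=
        AddSubgroup.card_eq_card_quotient_mul_card_addSubgroup _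

def nTorsionMap (h : A →+ B) : nTorsion n A →+ nTorsion n B :=
  (h.comp (nTorsion n A).subtype).codRestrict (nTorsion n B) fun x => by
    change n • h x = 0
    rw [← map_nsmul, x.2.out, map_zero]

def smulTopQuotientMap (h : A →+ B) : A ⧸ smulTop n A →+ B ⧸ smulTop n B :=
  QuotientAddGroup.map _ _ h (by rintro _ ⟨y, rfl⟩; exact ⟨h y, (map_nsmul h n y).symm⟩)

theorem toIntLinearMap_comp_nsmul (h : A →+ B) :
    h.toIntLinearMap ∘ₗ DistribSMul.toLinearMap ℤ A n =
      DistribSMul.toLinearMap ℤ B n ∘ₗ h.toIntLinearMap :=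
  LinearMap.ext (map_nsmul h n)

variable {F R S : Type*} [AddCommGroup F] [AddCommGroup R] [AddCommGroup S]
  {f : F →+ R} {g : R →+ S}

theorem nTorsionMap_injective (hf : Injective f) : Injective (nTorsionMap n f) :=
  fun _ _ h => Subtype.ext (hf (congrArg Subtype.val h))

theorem exact_nTorsionMap (hfg : Exact f g) (hf : Injective f) :
    Exact (nTorsionMap n f) (nTorsionMap n g) := by
  rintro ⟨y, hy⟩
  constructor
  · intro h
    obtain ⟨x, rfl⟩ := (hfg y).mp (congrArg Subtype.val h)
    have hx : n • x = 0 := hf (by rw [map_nsmul, map_zero]; exact hy)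
    exact ⟨⟨x, hx⟩, rfl⟩
  · rintro ⟨x, hx⟩
    rw [← hx]
    exact Subtype.ext (hfg.apply_apply_eq_zero x.1)

theorem smulTopQuotientMap_surjective (hg : Surjective g) :
    Surjective (smulTopQuotientMap n g) :=
  QuotientAddGroup.map_surjective_of_surjective _ _ _
    (QuotientAddGroup.mk_surjective.comp hg) _

theorem exact_smulTopQuotientMap (hfg : Exact f g) (hg : Surjective g) :
    Exact (smulTopQuotientMap n f) (smulTopQuotientMap n g) := by
  intro q
  induction q using QuotientAddGroup.induction_on with | H r => ?_
  constructor
  · intro h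
    obtain ⟨s, hs : n • s = g r⟩ := (QuotientAddGroup.eq_zero_iff (g r)).mp h
    obtain ⟨r', rfl⟩ := hg s
    obtain ⟨x, hx⟩ := (hfg (r - n • r')).mp (by rw [map_sub, map_nsmul, hs, sub_self])
    refine ⟨x, QuotientAddGroup.eq_iff_sub_mem.mpr ⟨-r', ?_⟩⟩
    change n • -r' = f x - r
    rw [hx, smul_neg, sub_sub_cancel_left]
  · rintro ⟨q, hq⟩
    rw [← hq]
    induction q using QuotientAddGroup.induction_on with | H x => ?_
    exact congrArg QuotientAddGroup.mk (hfg.apply_apply_eq_zero x)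

variable (f g) in
noncomputable def nTorsionConnectingHom (hfg : Exact f g) (hf : Injective f)
    (hg : Surjective g) : nTorsion n S →ₗ[ℤ] F ⧸ smulTop n F :=
  SnakeLemma.δ' (DistribSMul.toLinearMap ℤ F n) (DistribSMul.toLinearMap ℤ R n)
    (DistribSMul.toLinearMap ℤ S n) f.toIntLinearMap g.toIntLinearMap hfg f.toIntLinearMap
    g.toIntLinearMap hfg (toIntLinearMap_comp_nsmul n f) (toIntLinearMap_comp_nsmul n g)
    (nTorsion n S).subtype.toIntLinearMap (exact_subtype_nTorsion n)
    (QuotientAddGroup.mk' (smulTop n F)).toIntLinearMap (exact_nsmul_mk_smulTop n) hg hf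

theorem exact_nTorsionMap_connectingHom (hfg : Exact f g) (hf : Injective f)
    (hg : Surjective g) : Exact (nTorsionMap n g) (nTorsionConnectingHom n f g hfg hf hg) :=
  SnakeLemma.exact_δ'_right _ _ _ _ _ _ _ _ _ _ _ _ (exact_subtype_nTorsion n) _ _ _ _ _ _
    (nTorsionMap n g).toIntLinearMap rfl Subtype.val_injective

theorem exact_connectingHom_smulTopQuotientMap (hfg : Exact f g) (hf : Injective f)
    (hg : Surjective g) :
    Exact (nTorsionConnectingHom n f g hfg hf hg) (smulTopQuotientMap n f) :=
  SnakeLemma.exact_δ'_left _ _ _ _ _ _ _ _ _ _ _ _ _ _ _ _ (exact_nsmul_mk_smulTop n) _ _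
    (smulTopQuotientMap n f).toIntLinearMap rfl QuotientAddGroup.mk_surjective

theorem card_nTorsion_mul_card_quotient_smulTop_eq_of_exact (hfg : Exact f g)
    (hf : Injective f) (hg : Surjective g) :
    Nat.card (nTorsion n F) * Nat.card (nTorsion n S) * Nat.card (R ⧸ smulTop n R) =
      Nat.card (nTorsion n R) * Nat.card (F ⧸ smulTop n F) * Nat.card (S ⧸ smulTop n S) :=
  card_mul_card_mul_card_eq_of_exact _ _ (nTorsionConnectingHom n f g hfg hf hg).toAddMonoidHom
    _ _ (nTorsionMap_injective n hf) (exact_nTorsionMap n hfg hf)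
    (exact_nTorsionMap_connectingHom n hfg hf hg)
    (exact_connectingHom_smulTopQuotientMap n hfg hf hg) (exact_smulTopQuotientMap n hfg hg)
    (smulTopQuotientMap_surjective n hg)

end MulByN

theorem stmt_4_general {F R S : Type} [AddCommGroup F] [AddCommGroup R] [AddCommGroup S]
    [Finite F] (f : F →+ R) (g : R →+ S)
    (hf : Function.Injective f) (hg : Function.Surjective g) (hex : f.range = g.ker)
    (n : ℕ) :
    Nat.card (nTorsion n R) * Nat.card (S ⧸ smulTop n S) * Nat.card (F ⧸ smulTop n F)
        = Nat.card (nTorsion n S) * Nat.card (nTorsion n F) * Nat.card (R ⧸ smulTop n R) ∧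
    Nat.card (nTorsion n F) = Nat.card (F ⧸ smulTop n F) ∧
    Nat.card (nTorsion n R) * Nat.card (S ⧸ smulTop n S)
        = Nat.card (nTorsion n S) * Nat.card (R ⧸ smulTop n R) := by
  have hsnake := card_nTorsion_mul_card_quotient_smulTop_eq_of_exact n
    (AddMonoidHom.exact_iff.mpr hex.symm) hf hg
  have hF := card_nTorsion_eq_card_quotient_smulTop n (A := F)
  have hmul : Nat.card (nTorsion n R) * Nat.card (S ⧸ smulTop n S) * Nat.card (F ⧸ smulTop n F)
      = Nat.card (nTorsion n S) * Nat.card (nTorsion n F) * Nat.card (R ⧸ smulTop n R) := by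
    linarith
  refine ⟨hmul, hF, Nat.eq_of_mul_eq_mul_right (Nat.card_pos (α := F ⧸ smulTop n F)) ?_⟩
  rw [hmul, ← hF]
  ring

/-- for a short exact sequence `0 → F → R → S → 0` with `F` finite, the ratio
`|n-torsion|/|mod-n quotient|` is multiplicative, the ratio for `F` is 1, and hence the ratios
for `R` and `S` coincide (stated multiplicatively). -/
theorem stmt_4 {F R S : Type} [AddCommGroup F] [AddCommGroup R] [AddCommGroup S]
    [Finite F] (f : F →+ R) (g : R →+ S)
    (hf : Function.Injective f) (hg : Function.Surjective g) (hex : f.range = g.ker)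
    (n : ℕ) (hn : 0 < n)
    (h1 : Finite (nTorsion n R)) (h2 : Finite (R ⧸ smulTop n R))
    (h3 : Finite (nTorsion n S)) (h4 : Finite (S ⧸ smulTop n S)) :
    Nat.card (nTorsion n R) * Nat.card (S ⧸ smulTop n S) * Nat.card (F ⧸ smulTop n F)
        = Nat.card (nTorsion n S) * Nat.card (nTorsion n F) * Nat.card (R ⧸ smulTop n R) ∧
    Nat.card (nTorsion n F) = Nat.card (F ⧸ smulTop n F) ∧
    Nat.card (nTorsion n R) * Nat.card (S ⧸ smulTop n S)
        = Nat.card (nTorsion n S) * Nat.card (R ⧸ smulTop n R) :=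
  stmt_4_general f g hf hg hex n
end

section
/- Let f : M → N be a homomorphism of abelian groups with finite kernel and finite cokernel, and suppose for a positive integer n that the n-torsion subgroups and mod-n quotients of M and N are finite. Then |{x∈M : n•x=0}| / |M/nM| = |{x∈N : n•x=0}| / |N/nN|. -/
/-! The quantity `|ker h| / |coker h|` is multiplicative under composition of homomorphisms with
finite kernel and cokernel, by the kernel–cokernel sequence of a composite. The map
`n • f : M → N` factors both as `(n •) ∘ f` and as `f ∘ (n •)`; comparing the two factorisations
and cancelling the (nonzero) contribution of `f` leaves
`|M[n]| / |M/nM| = |N[n]| / |N/nN|`. -/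

namespace AddMonoidHom

variable {A B C : Type*} [AddCommGroup A] [AddCommGroup B] [AddCommGroup C]

theorem card_ker_comp (f : A →+ B) (g : B →+ C) :
    Nat.card (g.comp f).ker = Nat.card f.ker * Nat.card ↥(f.range ⊓ g.ker) := by
  have hle : f.ker ≤ (g.comp f).ker := fun x hx => by
    rw [mem_ker, comp_apply, mem_ker.mp hx, map_zero]
  rw [← AddSubgroup.relIndex_bot_left, ← AddSubgroup.relIndex_mul_relIndex _ _ _ bot_le hle,
    AddSubgroup.relIndex_bot_left, AddSubgroup.relIndex_ker, ← comap_ker,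
    AddSubgroup.map_comap_eq]

theorem index_range_comp (f : A →+ B) (g : B →+ C) :
    (g.comp f).range.index = (f.range ⊔ g.ker).index * g.range.index := by
  rw [range_comp, AddSubgroup.index_map]

theorem finite_ker_comp (f : A →+ B) (g : B →+ C) [Finite f.ker] [Finite g.ker] :
    Finite (g.comp f).ker := by
  have : Finite ↥(f.range ⊓ g.ker) :=
    Finite.of_injective _ (AddSubgroup.inclusion_injective inf_le_right)
  refine Nat.finite_of_card_ne_zero ?_
  rw [card_ker_comp]
  exact mul_ne_zero Nat.card_pos.ne' Nat.card_pos.ne'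

theorem finite_quotient_range_comp (f : A →+ B) (g : B →+ C) [Finite (B ⧸ f.range)]
    [Finite (C ⧸ g.range)] : Finite (C ⧸ (g.comp f).range) := by
  have hsup : (f.range ⊔ g.ker).index ≠ 0 :=
    ne_zero_of_dvd_ne_zero AddSubgroup.index_ne_zero_of_finite
      (AddSubgroup.index_dvd_of_le le_sup_left)
  have : (g.comp f).range.FiniteIndex :=
    ⟨by rw [index_range_comp]; exact mul_ne_zero hsup AddSubgroup.index_ne_zero_of_finite⟩
  infer_instance

theorem card_ker_comp_mul_index_mul_index (f : A →+ B) (g : B →+ C) :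
    Nat.card (g.comp f).ker * g.range.index * f.range.index
      = Nat.card f.ker * Nat.card g.ker * (g.comp f).range.index := by
  have hker :
      Nat.card ↥(f.range ⊓ g.ker) * (f.range ⊓ g.ker).relIndex g.ker = Nat.card g.ker := by
    rw [← AddSubgroup.relIndex_bot_left, ← AddSubgroup.relIndex_bot_left,
      AddSubgroup.relIndex_mul_relIndex _ _ _ bot_le inf_le_right]
  have hcoker : f.range.index = f.range.relIndex g.ker * (f.range ⊔ g.ker).index := by
    rw [← AddSubgroup.relIndex_sup_left, AddSubgroup.relIndex_mul_index le_sup_left]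
  rw [card_ker_comp, index_range_comp, hcoker, ← hker, AddSubgroup.inf_relIndex_right]
  ring

end AddMonoidHom

theorem ker_nsmul_id (n : ℕ) (A : Type*) [AddCommGroup A] :
    (n • AddMonoidHom.id A).ker = nTorsion n A :=
  rfl

theorem range_nsmul_id (n : ℕ) (A : Type*) [AddCommGroup A] :
    (n • AddMonoidHom.id A).range = smulTop n A :=
  rfl

theorem stmt_13_general {M N : Type} [AddCommGroup M] [AddCommGroup N] (f : M →+ N)
    (hker : Finite f.ker) (hcoker : Finite (N ⧸ f.range))
    (n : ℕ)
    (h3 : Finite (nTorsion n N)) (h4 : Finite (N ⧸ smulTop n N)) :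
    Nat.card (nTorsion n M) * Nat.card (N ⧸ smulTop n N)
      = Nat.card (nTorsion n N) * Nat.card (M ⧸ smulTop n M) := by
  set h := (n • AddMonoidHom.id N).comp f
  have hcomm : h = f.comp (n • AddMonoidHom.id M) := by ext; simp [h]
  have hN := AddMonoidHom.card_ker_comp_mul_index_mul_index f (n • AddMonoidHom.id N)
  have hM := AddMonoidHom.card_ker_comp_mul_index_mul_index (n • AddMonoidHom.id M) f
  rw [← hcomm] at hM
  simp only [ker_nsmul_id, range_nsmul_id, AddSubgroup.index] at hN hM
  have : Finite (n • AddMonoidHom.id N).ker := h3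
  have : Finite (N ⧸ (n • AddMonoidHom.id N).range) := h4
  have : Finite h.ker := AddMonoidHom.finite_ker_comp _ _
  have : Finite (N ⧸ h.range) := AddMonoidHom.finite_quotient_range_comp _ _
  have hunit : Nat.card h.ker * Nat.card (N ⧸ f.range) * Nat.card f.ker
      * Nat.card (N ⧸ h.range) ≠ 0 := by
    simp only [ne_eq, mul_eq_zero, Nat.card_pos.ne', or_self, not_false_eq_true]
  refine mul_left_cancel₀ hunit ?_
  calc _ = Nat.card h.ker * Nat.card (N ⧸ smulTop n N) * Nat.card (N ⧸ f.range)
        * (Nat.card (nTorsion n M) * Nat.card f.ker * Nat.card (N ⧸ h.range)) := by ring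
    _ = Nat.card f.ker * Nat.card (nTorsion n N) * Nat.card (N ⧸ h.range)
        * (Nat.card h.ker * Nat.card (N ⧸ f.range) * Nat.card (M ⧸ smulTop n M)) := by
      rw [hN, hM]
    _ = _ := by ring

/-- a homomorphism with finite kernel and cokernel preserves the ratio of the size
of the `n`-torsion to the size of the mod-`n` quotient (stated multiplicatively). -/
theorem stmt_13 {M N : Type} [AddCommGroup M] [AddCommGroup N] (f : M →+ N)
    (hker : Finite f.ker) (hcoker : Finite (N ⧸ f.range))
    (n : ℕ) (hn : 0 < n)
    (h1 : Finite (nTorsion n M)) (h2 : Finite (M ⧸ smulTop n M))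
    (h3 : Finite (nTorsion n N)) (h4 : Finite (N ⧸ smulTop n N)) :
    Nat.card (nTorsion n M) * Nat.card (N ⧸ smulTop n N)
      = Nat.card (nTorsion n N) * Nat.card (M ⧸ smulTop n M) :=
  stmt_13_general f hker hcoker n h3 h4
end
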